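/- Let L be a Lie algebra over a field F and let b_1, …, b_n ∈ L be such that the operators ad(b_1), …, ad(b_n) pairwise commute and each b_i is a sandwich of L. Let U_k = U_k(ad(b_1), …, ad(b_n)) and suppose U_3 = U_4 = 0. Then for arbitrary elements y_1, y_2 ∈ L one has ad(y_1 U_2) ∘ ad(y_2 U_2) = U_2 ∘ ad(y_1) ∘ ad(y_2) ∘ U_2 (equality of operators on L, where y U_2 denotes the image of y under U_2, and compositions act in the listed order). -/

import Mathlib

/-!
Because the `ad b_i` commute and square to zero, `U_a * U_m = (a + m).choose m • U_(a+m)`.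
Expanding `ad` of `(∏_{i ∈ S} ad b_i) y` by the Leibniz rule gives a signed sum of terms
`P * ad y * Q` with `P`, `Q` products of the `ad b_i`; the sandwich condition kills every term in
which some `ad b_i` occurs on both sides, so `ad (U_k y) = ∑ m, (-1)^m • U_(k-m) * ad y * U_m`.
With `U_3 = U_4 = 0` this yields `U_1 * U_1 = 2 • U_2`, `U_1 * U_2 = U_2 * U_1 = U_2 * U_2 = 0`,
`ad (U_2 y) = U_2 * ad y + ad y * U_2 - U_1 * ad y * U_1`, `U_2 * ad y * U_1 = U_1 * ad y * U_2`
and `U_2 * ad y * U_2 = 0`, from which the identity is a computation in `Module.End F L`.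
-/

/-- The divided-power operator `U_k(d_1, …, d_n)`: the sum over all `k`-element subsets
`{i_1 < … < i_k}` of `{1, …, n}` of the compositions `d_{i_1} ∘ ⋯ ∘ d_{i_k}`.
`U_0` is the identity and `U_k = 0` for `k > n`. -/
noncomputable def Uop {F : Type*} {A : Type*} [Field F] [AddCommGroup A] [Module F A]
    {n : ℕ} (d : Fin n → Module.End F A) (k : ℕ) : Module.End F A :=
  ∑ S ∈ Finset.powersetCard k (Finset.univ : Finset (Fin n)),
    ((S.sort (· ≤ ·)).map d).prod

/-- `b` is a sandwich of the Lie algebra `L`. -/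
def IsSandwich (F : Type*) {L : Type*} [Field F] [LieRing L] [LieAlgebra F L] (b : L) : Prop :=
  LieAlgebra.ad F L b * LieAlgebra.ad F L b = 0 ∧
    ∀ c : L, LieAlgebra.ad F L b * LieAlgebra.ad F L c * LieAlgebra.ad F L b = 0

open Finset Function

section SortedProd

variable {ι R : Type*} [LinearOrder ι]

def sortedProd [Monoid R] (d : ι → R) (S : Finset ι) : R :=
  ((S.sort (· ≤ ·)).map d).prod

variable {d : ι → R}

lemma sortedProd_eq_noncommProd [Monoid R] (hc : Pairwise (Commute on d))
    (S : Finset ι) : sortedProd d S = S.noncommProd d (hc.set_pairwise _) := by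
  rw [sortedProd,
    ← noncommProd_toFinset _ _ (by rw [sort_toFinset]; exact hc.set_pairwise _) (sort_nodup _ _)]
  simp only [sort_toFinset]

lemma sortedProd_empty [Monoid R] : sortedProd d ∅ = 1 := by
  simp [sortedProd]

lemma sortedProd_insert [Monoid R] (hc : Pairwise (Commute on d)) {i : ι}
    {S : Finset ι} (hi : i ∉ S) : sortedProd d (insert i S) = d i * sortedProd d S := by
  simp only [sortedProd_eq_noncommProd hc]
  exact noncommProd_insert_of_notMem _ _ _ _ hi

lemma sortedProd_union [Monoid R] (hc : Pairwise (Commute on d))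
    {S T : Finset ι} (h : Disjoint S T) :
    sortedProd d (S ∪ T) = sortedProd d S * sortedProd d T := by
  simp only [sortedProd_eq_noncommProd hc]
  exact noncommProd_union_of_disjoint h _ _

lemma commute_sortedProd [Monoid R] (hc : Pairwise (Commute on d)) {i : ι}
    {S : Finset ι} (hi : i ∉ S) : Commute (d i) (sortedProd d S) := by
  rw [sortedProd_eq_noncommProd hc]
  exact noncommProd_commute _ _ _ _ fun j hj => hc (ne_of_mem_of_not_mem hj hi).symm

lemma sortedProd_eq_mul_erase [Monoid R] (hc : Pairwise (Commute on d)) {i : ι} {S : Finset ι}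
    (hi : i ∈ S) : sortedProd d S = d i * sortedProd d (S.erase i) := by
  conv_lhs => rw [← insert_erase hi]
  exact sortedProd_insert hc (notMem_erase i S)

lemma sortedProd_mul_mul_sortedProd_eq_zero [MonoidWithZero R] (hc : Pairwise (Commute on d))
    {X : R} (hX : ∀ i, d i * X * d i = 0) {S T : Finset ι} (h : ¬ Disjoint S T) :
    sortedProd d S * X * sortedProd d T = 0 := by
  obtain ⟨i, hiS, hiT⟩ := not_disjoint_iff.mp h
  rw [sortedProd_eq_mul_erase hc hiS, (commute_sortedProd hc (notMem_erase i S)).eq,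
    sortedProd_eq_mul_erase hc hiT]
  calc _ = sortedProd d (S.erase i) * (d i * X * d i) * sortedProd d (T.erase i) := by
        simp only [mul_assoc]
    _ = 0 := by rw [hX, mul_zero, zero_mul]

end SortedProd

lemma sum_powersetCard_sum_powersetCard_eq_sum_sdiff {ι M : Type*} [DecidableEq ι]
    [AddCommMonoid M] (U : Finset ι) (a m : ℕ) {f : Finset ι → Finset ι → M}
    (hf : ∀ S T, ¬ Disjoint S T → f S T = 0) :
    ∑ S ∈ powersetCard a U, ∑ T ∈ powersetCard m U, f S T =
      ∑ W ∈ powersetCard (a + m) U, ∑ T ∈ powersetCard m W, f (W \ T) T := by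
  rw [← sum_product', sum_sigma', ← sum_filter_of_ne (p := fun p => Disjoint p.1 p.2)
    fun p _ hp => by_contra fun h => hp (hf p.1 p.2 h)]
  refine sum_nbij' (fun p => ⟨p.1 ∪ p.2, p.2⟩) (fun q => (q.1 \ q.2, q.2)) ?_ ?_ ?_ ?_ ?_
  · rintro ⟨S, T⟩ hST
    simp only [mem_filter, mem_product, mem_powersetCard] at hST
    obtain ⟨⟨⟨hSU, rfl⟩, hTU, rfl⟩, hST⟩ := hST
    simp [union_subset hSU hTU, card_union_of_disjoint hST]
  · rintro ⟨W, T⟩ hWT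
    simp only [mem_sigma, mem_powersetCard] at hWT
    obtain ⟨⟨hWU, hW⟩, hTW, rfl⟩ := hWT
    simp [sdiff_subset.trans hWU, hTW.trans hWU, card_sdiff_of_subset hTW, hW, sdiff_disjoint]
  · rintro ⟨S, T⟩ hST
    simp [union_sdiff_cancel_right (mem_filter.mp hST).2]
  · rintro ⟨W, T⟩ hWT
    simp [sdiff_union_of_subset (mem_powersetCard.mp (mem_sigma.mp hWT).2).1]
  · rintro ⟨S, T⟩ hST
    simp [union_sdiff_cancel_right (mem_filter.mp hST).2]

section Uop

variable {F A : Type*} [Field F] [AddCommGroup A] [Module F A] {n : ℕ} {d : Fin n → Module.End F A}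

lemma Uop_eq_sum_sortedProd (d : Fin n → Module.End F A) (k : ℕ) :
    Uop d k = ∑ S ∈ powersetCard k univ, sortedProd d S :=
  rfl

lemma Uop_zero : Uop d 0 = 1 := by
  simp [Uop_eq_sum_sortedProd, sortedProd_empty]

lemma Uop_mul_mul_Uop (hc : Pairwise (Commute on d)) {X : Module.End F A}
    (hX : ∀ i, d i * X * d i = 0) (a m : ℕ) :
    Uop d a * X * Uop d m = ∑ W ∈ powersetCard (a + m) univ, ∑ T ∈ powersetCard m W,
      sortedProd d (W \ T) * X * sortedProd d T := by
  rw [Uop_eq_sum_sortedProd, Uop_eq_sum_sortedProd, sum_mul, sum_mul_sum]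
  exact sum_powersetCard_sum_powersetCard_eq_sum_sdiff _ _ _ fun S T h =>
    sortedProd_mul_mul_sortedProd_eq_zero hc hX h

lemma Uop_mul_Uop (hc : Pairwise (Commute on d)) (hsq : ∀ i, d i * d i = 0) (a m : ℕ) :
    Uop d a * Uop d m = (a + m).choose m • Uop d (a + m) := by
  have h := Uop_mul_mul_Uop hc (X := 1) (by simpa using hsq) a m
  rw [mul_one] at h
  rw [h, Uop_eq_sum_sortedProd, smul_sum]
  refine sum_congr rfl fun W hW => ?_
  calc ∑ T ∈ powersetCard m W, sortedProd d (W \ T) * 1 * sortedProd d T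
      = ∑ T ∈ powersetCard m W, sortedProd d W := sum_congr rfl fun T hT => by
        rw [mul_one, ← sortedProd_union hc sdiff_disjoint,
          sdiff_union_of_subset (mem_powersetCard.mp hT).1]
    _ = (a + m).choose m • sortedProd d W := by
        rw [sum_const, card_powersetCard, (mem_powersetCard.mp hW).2]

end Uop

section Lie

open LieAlgebra

variable {R L ι : Type*} [CommRing R] [LieRing L] [LieAlgebra R L] [LinearOrder ι] {b : ι → L}

lemma ad_sortedProd_apply (hc : Pairwise (Commute on fun i => ad R L (b i))) (S : Finset ι)
    (y : L) : ad R L (sortedProd (fun i => ad R L (b i)) S y) =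
      ∑ T ∈ S.powerset, (-1 : ℤ) ^ #T • (sortedProd (fun i => ad R L (b i)) (S \ T) *
        ad R L y * sortedProd (fun i => ad R L (b i)) T) := by
  induction S using Finset.induction_on with
  | empty => simp [sortedProd_empty]
  | @insert i S hi ih =>
    set d := fun j => ad R L (b j)
    have had : ∀ z, ad R L (d i z) = d i * ad R L z - ad R L z * d i := fun z => by
      ext w
      simp [d]
    have hwithout : ∀ T ∈ S.powerset,
        sortedProd d (insert i S \ T) * ad R L y * sortedProd d T =
          d i * (sortedProd d (S \ T) * ad R L y * sortedProd d T) := fun T hT => by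
      rw [insert_sdiff_of_notMem _ fun h => hi (mem_powerset.mp hT h),
        sortedProd_insert hc fun h => hi (mem_sdiff.mp h).1, mul_assoc, mul_assoc, mul_assoc]
    have hwith : ∀ T ∈ S.powerset,
        sortedProd d (insert i S \ insert i T) * ad R L y * sortedProd d (insert i T) =
          sortedProd d (S \ T) * ad R L y * sortedProd d T * d i := fun T hT => by
      have hiT : i ∉ T := fun h => hi (mem_powerset.mp hT h)
      rw [insert_sdiff_insert, sdiff_insert_of_notMem hi, sortedProd_insert hc hiT,
        (commute_sortedProd hc hiT).eq, mul_assoc _ (sortedProd d T)]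
    rw [sortedProd_insert hc hi, Module.End.mul_apply, had, ih, sum_powerset_insert hi, mul_sum,
      sum_mul, ← sum_sub_distrib, ← sum_add_distrib]
    refine sum_congr rfl fun T hT => ?_
    rw [hwithout T hT, hwith T hT, card_insert_of_notMem fun h => hi (mem_powerset.mp hT h),
      pow_succ, mul_neg_one, neg_smul, mul_smul_comm, smul_mul_assoc, sub_eq_add_neg]

end Lie

section Sandwich

open LieAlgebra

variable {F L : Type*} [Field F] [LieRing L] [LieAlgebra F L] {n : ℕ} {b : Fin n → L}

lemma ad_Uop_apply (hc : Pairwise (Commute on fun i => ad F L (b i)))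
    (hsand : ∀ i, IsSandwich F (b i)) (k : ℕ) (y : L) :
    ad F L (Uop (fun i => ad F L (b i)) k y) = ∑ m ∈ range (k + 1), (-1 : ℤ) ^ m •
      (Uop (fun i => ad F L (b i)) (k - m) * ad F L y * Uop (fun i => ad F L (b i)) m) := by
  set d := fun i => ad F L (b i)
  have hX : ∀ i, d i * ad F L y * d i = 0 := fun i => (hsand i).2 y
  calc ad F L (Uop d k y) = ∑ S ∈ powersetCard k univ, ad F L (sortedProd d S y) := by
        rw [Uop_eq_sum_sortedProd, LinearMap.sum_apply, map_sum]
    _ = ∑ S ∈ powersetCard k univ, ∑ m ∈ range (k + 1), ∑ T ∈ powersetCard m S,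
          (-1 : ℤ) ^ m • (sortedProd d (S \ T) * ad F L y * sortedProd d T) :=
        sum_congr rfl fun S hS => by
          rw [ad_sortedProd_apply hc, sum_powerset, (mem_powersetCard.mp hS).2]
          exact sum_congr rfl fun m _ => sum_congr rfl fun T hT => by
            rw [(mem_powersetCard.mp hT).2]
    _ = ∑ m ∈ range (k + 1), (-1 : ℤ) ^ m • ∑ S ∈ powersetCard k univ, ∑ T ∈ powersetCard m S,
          sortedProd d (S \ T) * ad F L y * sortedProd d T := by
        rw [sum_comm]
        simp only [smul_sum]
    _ = _ := sum_congr rfl fun m hm => by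
        rw [Uop_mul_mul_Uop hc hX, Nat.sub_add_cancel (Nat.lt_succ_iff.mp (mem_range.mp hm))]

lemma ad_Uop_two_apply (hc : Pairwise (Commute on fun i => ad F L (b i)))
    (hsand : ∀ i, IsSandwich F (b i)) (y : L) :
    ad F L (Uop (fun i => ad F L (b i)) 2 y) =
      Uop (fun i => ad F L (b i)) 2 * ad F L y + ad F L y * Uop (fun i => ad F L (b i)) 2 -
        Uop (fun i => ad F L (b i)) 1 * ad F L y * Uop (fun i => ad F L (b i)) 1 := by
  rw [ad_Uop_apply hc hsand]
  simp only [sum_range_succ, sum_range_zero, zero_add, pow_zero, pow_one, neg_one_sq, one_smul,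
    neg_one_zsmul, Nat.sub_zero, Nat.sub_self, Uop_zero, mul_one, one_mul]
  abel

lemma Uop_two_mul_ad_mul_Uop_one (hc : Pairwise (Commute on fun i => ad F L (b i)))
    (hsand : ∀ i, IsSandwich F (b i)) (hU3 : Uop (fun i => ad F L (b i)) 3 = 0) (y : L) :
    Uop (fun i => ad F L (b i)) 2 * ad F L y * Uop (fun i => ad F L (b i)) 1 =
      Uop (fun i => ad F L (b i)) 1 * ad F L y * Uop (fun i => ad F L (b i)) 2 := by
  rw [← neg_add_eq_zero]
  simpa [sum_range_succ, Uop_zero, hU3] using (ad_Uop_apply hc hsand 3 y).symm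

lemma Uop_two_mul_ad_mul_Uop_two (hc : Pairwise (Commute on fun i => ad F L (b i)))
    (hsand : ∀ i, IsSandwich F (b i)) (hU3 : Uop (fun i => ad F L (b i)) 3 = 0)
    (hU4 : Uop (fun i => ad F L (b i)) 4 = 0) (y : L) :
    Uop (fun i => ad F L (b i)) 2 * ad F L y * Uop (fun i => ad F L (b i)) 2 = 0 := by
  simpa [sum_range_succ, Uop_zero, hU3, hU4] using (ad_Uop_apply hc hsand 4 y).symm

end Sandwich

lemma two_conjugation_mul_of_relations {R : Type*} [Ring R] {u₁ u₂ a₁ a₂ : R}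
    (h11 : u₁ * u₁ = 2 • u₂) (h12 : u₁ * u₂ = 0) (h21 : u₂ * u₁ = 0) (h22 : u₂ * u₂ = 0)
    (hswap₁ : u₂ * a₁ * u₁ = u₁ * a₁ * u₂) (hswap₂ : u₂ * a₂ * u₁ = u₁ * a₂ * u₂)
    (hzero₁ : u₂ * a₁ * u₂ = 0) (hzero₂ : u₂ * a₂ * u₂ = 0) :
    (u₂ * a₂ + a₂ * u₂ - u₁ * a₂ * u₁) * (u₂ * a₁ + a₁ * u₂ - u₁ * a₁ * u₁) =
      u₂ * a₂ * a₁ * u₂ := by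
  have hu₂ : u₂ * (u₂ * a₁ + a₁ * u₂ - u₁ * a₁ * u₁) = 0 := by
    calc _ = u₂ * u₂ * a₁ + u₂ * a₁ * u₂ - u₂ * u₁ * (a₁ * u₁) := by noncomm_ring
      _ = 0 := by rw [h22, hzero₁, h21]; simp
  have hu₁ : u₁ * (u₂ * a₁ + a₁ * u₂ - u₁ * a₁ * u₁) = -(u₁ * a₁ * u₂) := by
    calc _ = u₁ * u₂ * a₁ + u₁ * a₁ * u₂ - u₁ * u₁ * (a₁ * u₁) := by noncomm_ring
      _ = u₁ * a₁ * u₂ - 2 • (u₁ * a₁ * u₂) := by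
        rw [h12, h11, smul_mul_assoc, ← mul_assoc, hswap₁, zero_mul, zero_add]
      _ = _ := by rw [two_smul]; abel
  calc _ = u₂ * a₂ * (u₂ * a₁ + a₁ * u₂ - u₁ * a₁ * u₁)
        + a₂ * (u₂ * (u₂ * a₁ + a₁ * u₂ - u₁ * a₁ * u₁))
        - u₁ * a₂ * (u₁ * (u₂ * a₁ + a₁ * u₂ - u₁ * a₁ * u₁)) := by noncomm_ring
    _ = u₂ * a₂ * u₂ * a₁ + u₂ * a₂ * a₁ * u₂ - u₂ * a₂ * u₁ * (a₁ * u₁)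
          + u₁ * a₂ * (u₁ * a₁ * u₂) := by
        rw [hu₂, hu₁]; noncomm_ring
    _ = u₂ * a₂ * a₁ * u₂ := by
        rw [hzero₂, hswap₂,
          show u₁ * a₂ * u₂ * (a₁ * u₁) = u₁ * a₂ * (u₂ * a₁ * u₁) by noncomm_ring, hswap₁]
        noncomm_ring

/-- If `U_3 = U_4 = 0` for `U_k = U_k(ad b_1, …, ad b_n)` built from pairwise ad-commuting
sandwiches, then `ad(y₁U₂) ∘ ad(y₂U₂) = U₂ ∘ ad(y₁) ∘ ad(y₂) ∘ U₂`
(compositions applied in the listed order). -/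
theorem Uop_two_conjugation
    {F : Type*} {L : Type*} [Field F] [LieRing L] [LieAlgebra F L]
    {n : ℕ} (b : Fin n → L)
    (hcomm : ∀ i j : Fin n, Commute (LieAlgebra.ad F L (b i)) (LieAlgebra.ad F L (b j)))
    (hsand : ∀ i : Fin n, IsSandwich F (b i))
    (hU3 : Uop (fun j => LieAlgebra.ad F L (b j)) 3 = 0)
    (hU4 : Uop (fun j => LieAlgebra.ad F L (b j)) 4 = 0) :
    ∀ y₁ y₂ : L,
      LieAlgebra.ad F L (Uop (fun j => LieAlgebra.ad F L (b j)) 2 y₂) *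
        LieAlgebra.ad F L (Uop (fun j => LieAlgebra.ad F L (b j)) 2 y₁) =
      Uop (fun j => LieAlgebra.ad F L (b j)) 2 * LieAlgebra.ad F L y₂ *
        LieAlgebra.ad F L y₁ * Uop (fun j => LieAlgebra.ad F L (b j)) 2 := by
  intro y₁ y₂
  have hc : Pairwise (Commute on fun j => LieAlgebra.ad F L (b j)) := fun i j _ => hcomm i j
  have hmul := Uop_mul_Uop hc fun i => (hsand i).1
  have hswap := Uop_two_mul_ad_mul_Uop_one hc hsand hU3
  have hzero := Uop_two_mul_ad_mul_Uop_two hc hsand hU3 hU4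
  rw [ad_Uop_two_apply hc hsand, ad_Uop_two_apply hc hsand]
  exact two_conjugation_mul_of_relations (by simpa using hmul 1 1) (by simpa [hU3] using hmul 1 2)
    (by simpa [hU3] using hmul 2 1) (by simpa [hU4] using hmul 2 2)
    (hswap y₁) (hswap y₂) (hzero y₁) (hzero y₂)
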